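/- The automaton with states {∨-state, ∧-state, third state, accepting sink} over alphabet {a,b,c} depicted in the paper (Figure: Example alt), recognising the language L of words in which a occurs finitely often and c occurs infinitely often, is neither ∃-GFG nor ∀-GFG: Adam wins Eve's letter game and Eve wins Adam's letter game. -/

import Mathlib

namespace GFGPaper

/-- Positive Boolean formulas over `Q`. -/
inductive PosBool (Q : Type) : Type
  | atom : Q → PosBool Q
  | band : PosBool Q → PosBool Q → PosBool Q
  | bor  : PosBool Q → PosBool Q → PosBool Q

/-- A (positional) choice of Eve inside a positive Boolean formula:
she resolves every disjunction (possibly differently in different conjuncts). -/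
inductive EveChoice {Q : Type} : PosBool Q → Type
  | atom (q : Q) : EveChoice (PosBool.atom q)
  | band {φ ψ : PosBool Q} : EveChoice φ → EveChoice ψ → EveChoice (PosBool.band φ ψ)
  | borl {φ ψ : PosBool Q} : EveChoice φ → EveChoice (PosBool.bor φ ψ)
  | borr {φ ψ : PosBool Q} : EveChoice ψ → EveChoice (PosBool.bor φ ψ)

/-- The atoms that Adam (resolving conjunctions) can reach against Eve's choice. -/
def EveChoice.outcome {Q : Type} : {φ : PosBool Q} → EveChoice φ → Set Q
  | _, .atom q => {q}
  | _, .band c d => c.outcome ∪ d.outcome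
  | _, .borl c => c.outcome
  | _, .borr c => c.outcome

/-- A choice of Adam inside a positive Boolean formula: he resolves every conjunction. -/
inductive AdamChoice {Q : Type} : PosBool Q → Type
  | atom (q : Q) : AdamChoice (PosBool.atom q)
  | bandl {φ ψ : PosBool Q} : AdamChoice φ → AdamChoice (PosBool.band φ ψ)
  | bandr {φ ψ : PosBool Q} : AdamChoice ψ → AdamChoice (PosBool.band φ ψ)
  | bor {φ ψ : PosBool Q} : AdamChoice φ → AdamChoice ψ → AdamChoice (PosBool.bor φ ψ)

/-- The atoms Eve (resolving disjunctions) can reach against Adam's choice. -/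
def AdamChoice.outcome {Q : Type} : {φ : PosBool Q} → AdamChoice φ → Set Q
  | _, .atom q => {q}
  | _, .bandl c => c.outcome
  | _, .bandr c => c.outcome
  | _, .bor c d => c.outcome ∪ d.outcome

/-- The unique atom reached when Eve plays `e` and Adam plays `a` on the same formula. -/
def resolve {Q : Type} : {φ : PosBool Q} → EveChoice φ → AdamChoice φ → Q
  | _, .atom q, _ => q
  | _, .band c _, .bandl e => resolve c e
  | _, .band _ d, .bandr e => resolve d e
  | _, .borl c, .bor e _ => resolve c e
  | _, .borr c, .bor _ f => resolve c f

def InfOften (p : ℕ → Prop) : Prop := ∀ N, ∃ n, N ≤ n ∧ p n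

/-- The parity condition: the maximal priority occurring infinitely often is even. -/
def ParityAcc (c : ℕ → ℕ) : Prop :=
  ∃ p, Even p ∧ InfOften (fun n => c n = p) ∧ ∀ q, p < q → ¬ InfOften (fun n => c n = q)

/-- An alternating automaton with an abstract acceptance condition on
infinite sequences of transitions. -/
structure AltAut (A Q : Type) where
  init : Q
  δ : Q → A → PosBool Q
  acc : (ℕ → Q × A × Q) → Prop

def trace {A Q : Type} (w : ℕ → A) (ρ : ℕ → Q) : ℕ → Q × A × Q :=
  fun n => (ρ n, w n, ρ (n + 1))

/-- Acceptance via the model-checking game: Eve has a (history-dependent)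
strategy resolving the disjunctions such that every consistent path
(i.e. every way for Adam to resolve the conjunctions) is accepting. -/
def AltAut.Accepts {A Q : Type} (M : AltAut A Q) (w : ℕ → A) : Prop :=
  ∃ σ : List Q → (n : ℕ) → (q : Q) → EveChoice (M.δ q (w n)),
    ∀ ρ : ℕ → Q, ρ 0 = M.init →
      (∀ n, ρ (n + 1) ∈ (σ (List.ofFn fun i : Fin n => ρ i.val) n (ρ n)).outcome) →
      M.acc (trace w ρ)

/-- Eve wins her letter game: she resolves disjunctions online (knowing only the
play so far) so that whenever the word Adam produces is in the language,
the constructed path is accepting. -/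
def ExistsGFG {A Q : Type} (M : AltAut A Q) : Prop :=
  ∃ σ : List (A × Q) → (a : A) → (q : Q) → EveChoice (M.δ q a),
    ∀ (w : ℕ → A) (ρ : ℕ → Q), ρ 0 = M.init →
      (∀ n, ρ (n + 1) ∈
        (σ (List.ofFn fun i : Fin n => (w i.val, ρ (i.val + 1))) (w n) (ρ n)).outcome) →
      M.Accepts w → M.acc (trace w ρ)

/-- Adam wins his letter game: he resolves conjunctions online so that whenever the
word is not in the language, the constructed path is rejecting. -/
def ForallGFG {A Q : Type} (M : AltAut A Q) : Prop :=
  ∃ τ : List (A × Q) → (a : A) → (q : Q) → AdamChoice (M.δ q a),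
    ∀ (w : ℕ → A) (ρ : ℕ → Q), ρ 0 = M.init →
      (∀ n, ρ (n + 1) ∈
        (τ (List.ofFn fun i : Fin n => (w i.val, ρ (i.val + 1))) (w n) (ρ n)).outcome) →
      M.Accepts w ∨ ¬ M.acc (trace w ρ)

/-- Eve wins her letter game with a strategy that is positional in the expanded
letter game, i.e. depends only on the word read so far and the current state. -/
def EveWinsPositional {A Q : Type} (M : AltAut A Q) : Prop :=
  ∃ σ : List A → (a : A) → (q : Q) → EveChoice (M.δ q a),
    ∀ (w : ℕ → A) (ρ : ℕ → Q), ρ 0 = M.init →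
      (∀ n, ρ (n + 1) ∈ (σ (List.ofFn fun i : Fin n => w i.val) (w n) (ρ n)).outcome) →
      M.Accepts w → M.acc (trace w ρ)

/-- Alternating parity automaton (priorities on transitions). -/
structure APW (A Q : Type) where
  init : Q
  δ : Q → A → PosBool Q
  prio : Q → A → Q → ℕ

def APW.toAlt {A Q : Type} (M : APW A Q) : AltAut A Q :=
  { init := M.init, δ := M.δ,
    acc := fun t => ParityAcc fun n => M.prio (t n).1 (t n).2.1 (t n).2.2 }

def APW.Accepts {A Q : Type} (M : APW A Q) (w : ℕ → A) : Prop := M.toAlt.Accepts w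

def PosBool.dual {Q : Type} : PosBool Q → PosBool Q
  | .atom q => .atom q
  | .band φ ψ => .bor φ.dual ψ.dual
  | .bor φ ψ => .band φ.dual ψ.dual

/-- The dual automaton: swap ∧/∨ and increase all priorities by one. -/
def APW.dual {A Q : Type} (M : APW A Q) : APW A Q :=
  { init := M.init, δ := fun q a => (M.δ q a).dual,
    prio := fun q a q' => M.prio q a q' + 1 }

/-- The box of a positional Eve strategy on the one-step arena over `a`. -/
def stratBox {A Q : Type} (δ : Q → A → PosBool Q) (a : A)
    (σ : (q : Q) → EveChoice (δ q a)) : Set (Q × A × Q) :=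
  { t | t.2.1 = a ∧ t.2.2 ∈ (σ t.1).outcome }

def BoxesAt {A Q : Type} (δ : Q → A → PosBool Q) (a : A) : Set (Set (Q × A × Q)) :=
  Set.range (stratBox δ a)

def Boxes {A Q : Type} (δ : Q → A → PosBool Q) : Set (Set (Q × A × Q)) :=
  ⋃ a, BoxesAt δ a

/-- A sequence of boxes is universally accepting if every path through it is accepting. -/
def UnivAcc {A Q : Type} (M : AltAut A Q) (β : ℕ → Set (Q × A × Q)) : Prop :=
  ∀ (ρ : ℕ → Q) (wa : ℕ → A), ρ 0 = M.init →
    (∀ n, (ρ n, wa n, ρ (n + 1)) ∈ β n) →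
    M.acc (fun n => (ρ n, wa n, ρ (n + 1)))

/-- Deterministic parity automaton (priorities on transitions). -/
structure DPA (A P : Type) where
  init : P
  step : P → A → P
  prio : P → A → ℕ

def DPA.run {A P : Type} (D : DPA A P) (w : ℕ → A) : ℕ → P
  | 0 => D.init
  | n + 1 => D.step (DPA.run D w n) (w n)

def DPA.Accepts {A P : Type} (D : DPA A P) (w : ℕ → A) : Prop :=
  ParityAcc fun n => D.prio (D.run w n) (w n)

def pref {A : Type} (w : ℕ → A) (n : ℕ) : List A := List.ofFn fun i : Fin n => w i.val

/-- Nondeterministic parity automaton. -/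
structure NPA (A P : Type) where
  init : P
  Δ : P → A → Set P
  prio : P → A → P → ℕ

def NPA.IsRun {A P : Type} (N : NPA A P) (w : ℕ → A) (ρ : ℕ → P) : Prop :=
  ρ 0 = N.init ∧ ∀ n, ρ (n + 1) ∈ N.Δ (ρ n) (w n)

def NPA.Accepts {A P : Type} (N : NPA A P) (w : ℕ → A) : Prop :=
  ∃ ρ, N.IsRun w ρ ∧ ParityAcc fun n => N.prio (ρ n) (w n) (ρ (n + 1))

/-- A nondeterministic automaton is GFG if its nondeterminism can be resolved
based only on the prefix of the word read so far. -/
def NPA.GFG {A P : Type} (N : NPA A P) : Prop :=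
  ∃ f : List A → P, f [] = N.init ∧ (∀ u a, f (u ++ [a]) ∈ N.Δ (f u) a) ∧
    ∀ w : ℕ → A, N.Accepts w →
      ParityAcc fun n => N.prio (f (pref w n)) (w n) (f (pref w (n + 1)))

/-- Universal parity automaton. -/
structure UPA (A P : Type) where
  init : P
  Δ : P → A → Set P
  prio : P → A → P → ℕ

def UPA.IsRun {A P : Type} (N : UPA A P) (w : ℕ → A) (ρ : ℕ → P) : Prop :=
  ρ 0 = N.init ∧ ∀ n, ρ (n + 1) ∈ N.Δ (ρ n) (w n)

def UPA.Accepts {A P : Type} (N : UPA A P) (w : ℕ → A) : Prop :=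
  ∀ ρ, N.IsRun w ρ → ParityAcc fun n => N.prio (ρ n) (w n) (ρ (n + 1))

/-- A universal automaton is GFG if its universality can be resolved online:
on every word outside the language the produced run is rejecting. -/
def UPA.GFG {A P : Type} (N : UPA A P) : Prop :=
  ∃ f : List A → P, f [] = N.init ∧ (∀ u a, f (u ++ [a]) ∈ N.Δ (f u) a) ∧
    ∀ w : ℕ → A, ¬ N.Accepts w →
      ¬ ParityAcc fun n => N.prio (f (pref w n)) (w n) (f (pref w (n + 1)))

/-- A run of the box automaton `A^□` over `w` is a sequence of boxes. -/
def BoxRun {A Q : Type} (M : APW A Q) (w : ℕ → A) (β : ℕ → Set (Q × A × Q)) : Prop :=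
  ∀ n, β n ∈ BoxesAt M.δ (w n)

/-- Acceptance of the box automaton `A^□` built on a deterministic automaton `B`
over boxes: some box run is accepted by `B`. -/
def boxAccepts {A Q P : Type} (M : APW A Q) (B : DPA (Set (Q × A × Q)) P)
    (w : ℕ → A) : Prop :=
  ∃ β, BoxRun M w β ∧ B.Accepts β

/-- GFGness of the box automaton `A^□`: the box (its only nondeterminism) can be
chosen based only on the prefix of the word read. -/
def boxGFG {A Q P : Type} (M : APW A Q) (B : DPA (Set (Q × A × Q)) P) : Prop :=
  ∃ g : List A → A → Set (Q × A × Q),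
    (∀ u a, g u a ∈ BoxesAt M.δ a) ∧
    ∀ w : ℕ → A, boxAccepts M B w → B.Accepts (fun n => g (pref w n) (w n))

/-- A Rabin/Streett pair of sets of transitions. -/
structure RabinPair (T : Type) where
  bad : Set T
  good : Set T

def RabinAcc {T : Type} (pairs : Set (RabinPair T)) (t : ℕ → T) : Prop :=
  ∃ p ∈ pairs, (¬ InfOften fun n => t n ∈ p.bad) ∧ InfOften fun n => t n ∈ p.good

def StreettAcc {T : Type} (pairs : Set (RabinPair T)) (t : ℕ → T) : Prop :=
  ∀ p ∈ pairs, (¬ InfOften fun n => t n ∈ p.bad) ∨ InfOften fun n => t n ∈ p.good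

/-- Alternating Rabin automaton. -/
structure ARW (A Q : Type) where
  init : Q
  δ : Q → A → PosBool Q
  pairs : Set (RabinPair (Q × A × Q))

def ARW.toAlt {A Q : Type} (M : ARW A Q) : AltAut A Q :=
  { init := M.init, δ := M.δ, acc := RabinAcc M.pairs }

/-- Alternating Streett automaton. -/
structure ASW (A Q : Type) where
  init : Q
  δ : Q → A → PosBool Q
  pairs : Set (RabinPair (Q × A × Q))

def ASW.toAlt {A Q : Type} (M : ASW A Q) : AltAut A Q :=
  { init := M.init, δ := M.δ, acc := StreettAcc M.pairs }

end GFGPaper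

namespace GFGPaper

/-- The three-letter alphabet `{a, b, c}`. -/
inductive L3 : Type
  | la | lb | lc
deriving DecidableEq

/-- The five states of the example automaton: the ∨-state, the ∧-state, the
third state, the accepting sink, and the rejecting sink. -/
inductive St5 : Type
  | s0 | s1 | s2 | s3 | dead
deriving DecidableEq

open L3 St5 in
/-- The alternating weak (Büchi on states `{s1, s3}`) automaton of the example:
it recognises the words in which `a` occurs finitely often and `c` occurs
infinitely often; omitted transitions go to a rejecting sink. -/
def exampleAut : AltAut L3 St5 where
  init := s0
  δ := fun q x =>
    match q, x with
    | s0, la => .atom s0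
    | s0, lb => .bor (.atom s0) (.atom s1)
    | s0, lc => .bor (.atom s0) (.atom s1)
    | s1, la => .atom dead
    | s1, lb => .band (.atom s1) (.atom s2)
    | s1, lc => .atom s1
    | s2, la => .atom dead
    | s2, lb => .atom s2
    | s2, lc => .atom s3
    | s3, la => .atom dead
    | s3, lb => .atom s3
    | s3, lc => .atom s3
    | dead, _ => .atom dead
  acc := fun t => InfOften fun n => (t n).2.2 = s1 ∨ (t n).2.2 = s3


/-!
On an accepted word Eve waits in the ∨-state until the last `a` and then moves to the ∧-state,
from where every `c` leads to an accepting state. Conversely, an accepting path leaves the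
∨-state, after which an `a` leads to the rejecting sink; and against any strategy of Eve, Adam
moves to the third state on a `b` read after the last `c`, which traps the path in the third
state or the rejecting sink.

In Eve's letter game Adam plays `c` until Eve enters the ∧-state and then `a`, sending the path
to the rejecting sink; either way the word ends in `c^ω` and lies in `L`. In Adam's letter game
Eve enters the ∧-state on `b` and plays `b` until Adam moves to the third state, then plays `c`
once: the path then visits accepting states infinitely often, while the word, `b^ω` or
`b^* c b^ω`, is not in `L`.
-/

variable {A Q : Type}

def PosBool.atoms : PosBool Q → Set Q
  | .atom q => {q}
  | .band φ ψ => φ.atoms ∪ ψ.atoms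
  | .bor φ ψ => φ.atoms ∪ ψ.atoms

theorem EveChoice.outcome_subset_atoms {φ : PosBool Q} (e : EveChoice φ) :
    e.outcome ⊆ φ.atoms := by
  induction e with
  | atom q => exact subset_rfl
  | band c d ihc ihd => exact Set.union_subset_union ihc ihd
  | borl c ih => exact ih.trans Set.subset_union_left
  | borr c ih => exact ih.trans Set.subset_union_right

theorem AdamChoice.outcome_subset_atoms {φ : PosBool Q} (a : AdamChoice φ) :
    a.outcome ⊆ φ.atoms := by
  induction a with
  | atom q => exact subset_rfl
  | bandl c ih => exact ih.trans Set.subset_union_left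
  | bandr c ih => exact ih.trans Set.subset_union_right
  | bor c d ihc ihd => exact Set.union_subset_union ihc ihd

theorem resolve_mem_outcome {φ : PosBool Q} (e : EveChoice φ) (a : AdamChoice φ) :
    resolve e a ∈ e.outcome ∧ resolve e a ∈ a.outcome := by
  induction e with
  | atom q => cases a; exact ⟨rfl, rfl⟩
  | band c d ihc ihd =>
    cases a with
    | bandl a => exact ⟨Or.inl (ihc a).1, (ihc a).2⟩
    | bandr a => exact ⟨Or.inr (ihd a).1, (ihd a).2⟩
  | borl c ih =>
    cases a with
    | bor a _ => exact ⟨(ih a).1, Or.inl (ih a).2⟩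
  | borr c ih =>
    cases a with
    | bor _ a => exact ⟨(ih a).1, Or.inr (ih a).2⟩

/-- `right = true` chooses the right disjunct everywhere. -/
def PosBool.eveChoice (right : Bool) : (φ : PosBool Q) → EveChoice φ
  | .atom q => .atom q
  | .band φ ψ => .band (φ.eveChoice right) (ψ.eveChoice right)
  | .bor φ ψ => bif right then .borr (ψ.eveChoice right) else .borl (φ.eveChoice right)

/-- `right = true` chooses the right conjunct everywhere. -/
def PosBool.adamChoice (right : Bool) : (φ : PosBool Q) → AdamChoice φ
  | .atom q => .atom q
  | .band φ ψ => bif right then .bandr (ψ.adamChoice right) else .bandl (φ.adamChoice right)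
  | .bor φ ψ => .bor (φ.adamChoice right) (ψ.adamChoice right)

def AltAut.Step (M : AltAut A Q) (q : Q) (x : A) (q' : Q) : Prop := q' ∈ (M.δ q x).atoms

theorem exists_seq_ofFn_history {X Y : Type} (x₀ : X) (h : X → X → Y)
    (g : ℕ → List Y → X → X) :
    ∃ x : ℕ → X, x 0 = x₀ ∧
      ∀ n, x (n + 1) = g n (List.ofFn fun i : Fin n => h (x i) (x (i + 1))) (x n) := by
  let p : ℕ → List Y × X := fun n =>
    Nat.rec ([], x₀) (fun n p => (p.1 ++ [h p.2 (g n p.1 p.2)], g n p.1 p.2)) n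
  have hp : ∀ n, (p n).1 = List.ofFn fun i : Fin n => h (p i).2 (p (i + 1)).2 := by
    intro n
    induction n with
    | zero => rfl
    | succ n ih =>
      rw [List.ofFn_succ_last]
      exact congrArg (· ++ _) ih
  exact ⟨fun n => (p n).2, rfl, fun n => by simp only [← hp]; rfl⟩

theorem AltAut.Accepts.exists_acc_path {M : AltAut A Q} {w : ℕ → A} (hw : M.Accepts w)
    (τ : (n : ℕ) → (q : Q) → AdamChoice (M.δ q (w n))) :
    ∃ ρ : ℕ → Q, ρ 0 = M.init ∧ (∀ n, ρ (n + 1) ∈ (τ n (ρ n)).outcome) ∧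
      M.acc (trace w ρ) := by
  obtain ⟨σ, hσ⟩ := hw
  obtain ⟨ρ, h0, hρ⟩ :=
    exists_seq_ofFn_history M.init (fun q _ => q) fun n l q => resolve (σ l n q) (τ n q)
  refine ⟨ρ, h0, fun n => ?_, hσ ρ h0 fun n => ?_⟩
  · rw [hρ]; exact (resolve_mem_outcome _ _).2
  · rw [hρ]; exact (resolve_mem_outcome _ _).1

theorem ExistsGFG.exists_path {M : AltAut A Q} (hM : ExistsGFG M) (letter : Q → A)
    (τ : (a : A) → (q : Q) → AdamChoice (M.δ q a)) :
    ∃ ρ : ℕ → Q, ρ 0 = M.init ∧ (∀ n, ρ (n + 1) ∈ (τ (letter (ρ n)) (ρ n)).outcome) ∧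
      (M.Accepts (fun n => letter (ρ n)) → M.acc (trace (fun n => letter (ρ n)) ρ)) := by
  obtain ⟨σ, hσ⟩ := hM
  obtain ⟨ρ, h0, hρ⟩ := exists_seq_ofFn_history M.init (fun q q' => (letter q, q'))
    fun _ l q => resolve (σ l (letter q) q) (τ (letter q) q)
  refine ⟨ρ, h0, fun n => ?_, hσ _ ρ h0 fun n => ?_⟩
  · rw [hρ]; exact (resolve_mem_outcome _ _).2
  · rw [hρ]; exact (resolve_mem_outcome _ _).1

theorem ForallGFG.exists_path {M : AltAut A Q} (hM : ForallGFG M) (letter : Q → A)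
    (σ : (a : A) → (q : Q) → EveChoice (M.δ q a)) :
    ∃ ρ : ℕ → Q, ρ 0 = M.init ∧ (∀ n, ρ (n + 1) ∈ (σ (letter (ρ n)) (ρ n)).outcome) ∧
      (M.Accepts (fun n => letter (ρ n)) ∨ ¬ M.acc (trace (fun n => letter (ρ n)) ρ)) := by
  obtain ⟨τ, hτ⟩ := hM
  obtain ⟨ρ, h0, hρ⟩ := exists_seq_ofFn_history M.init (fun q q' => (letter q, q'))
    fun _ l q => resolve (σ (letter q) q) (τ l (letter q) q)
  refine ⟨ρ, h0, fun n => ?_, hτ _ ρ h0 fun n => ?_⟩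
  · rw [hρ]; exact (resolve_mem_outcome _ _).1
  · rw [hρ]; exact (resolve_mem_outcome _ _).2

theorem forall_ge_mem_of_step {X : Type} {ρ : ℕ → X} {S : Set X} {N : ℕ} (hN : ρ N ∈ S)
    (hstep : ∀ n, N ≤ n → ρ n ∈ S → ρ (n + 1) ∈ S) : ∀ n, N ≤ n → ρ n ∈ S := by
  intro n hn
  induction n, hn using Nat.le_induction with
  | base => exact hN
  | succ n hn ih => exact hstep n hn ih

open L3 St5

section Steps

variable {q q' : St5} {x : L3}

theorem step_ne_s0 (h : exampleAut.Step q x q') (hq : q ≠ s0) : q' ≠ s0 := by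
  cases q <;> cases x <;> simp [AltAut.Step, exampleAut, PosBool.atoms] at h ⊢ <;> aesop

theorem step_eq_dead_of_la (h : exampleAut.Step q x q') (hq : q ≠ s0) (hx : x = la) :
    q' = dead := by
  subst hx; cases q <;> simp_all [AltAut.Step, exampleAut, PosBool.atoms]

theorem step_eq_dead_of_dead (h : exampleAut.Step q x q') (hq : q = dead) : q' = dead := by
  subst hq; cases x <;> simp_all [AltAut.Step, exampleAut, PosBool.atoms]

theorem step_mem_live (h : exampleAut.Step q x q') (hq : q ∈ ({s1, s2, s3} : Set St5))
    (hx : x ≠ la) : q' ∈ ({s1, s2, s3} : Set St5) := by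
  cases q <;> cases x <;> simp [AltAut.Step, exampleAut, PosBool.atoms] at h ⊢ <;> aesop

theorem step_accepting_of_lc (h : exampleAut.Step q lc q') (hq : q ∈ ({s1, s2, s3} : Set St5)) :
    q' = s1 ∨ q' = s3 := by
  cases q <;> simp_all [AltAut.Step, exampleAut, PosBool.atoms]

theorem step_ne_s3 (h : exampleAut.Step q x q') (hq : q ≠ s3) (hx : x ≠ lc) : q' ≠ s3 := by
  cases q <;> cases x <;> simp [AltAut.Step, exampleAut, PosBool.atoms] at h ⊢ <;> aesop

theorem step_mem_s2_dead (h : exampleAut.Step q x q') (hq : q ∈ ({s2, dead} : Set St5))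
    (hx : x ≠ lc) : q' ∈ ({s2, dead} : Set St5) := by
  cases q <;> cases x <;> simp [AltAut.Step, exampleAut, PosBool.atoms] at h ⊢ <;> aesop

theorem step_eq_s3_of_s3 (h : exampleAut.Step q x q') (hq : q = s3) (hx : x ≠ la) : q' = s3 := by
  subst hq; cases x <;> simp_all [AltAut.Step, exampleAut, PosBool.atoms]

theorem step_eq_s3_of_s2_lc (h : exampleAut.Step q x q') (hq : q = s2) (hx : x = lc) : q' = s3 := by
  subst hq hx; exact h

theorem eq_s0_of_mem_eveChoice_false (h : q' ∈ ((exampleAut.δ s0 x).eveChoice false).outcome) :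
    q' = s0 := by
  cases x <;> simp_all [exampleAut, PosBool.eveChoice, EveChoice.outcome]

theorem eq_s1_of_mem_eveChoice_true (h : q' ∈ ((exampleAut.δ s0 x).eveChoice true).outcome)
    (hx : x ≠ la) : q' = s1 := by
  cases x <;> simp_all [exampleAut, PosBool.eveChoice, EveChoice.outcome]

theorem mem_of_mem_adamChoice_false (h : q' ∈ ((exampleAut.δ q x).adamChoice false).outcome)
    (hq : q ∈ ({s0, s1, dead} : Set St5)) : q' ∈ ({s0, s1, dead} : Set St5) := by
  cases q <;> cases x <;>
    simp [exampleAut, PosBool.adamChoice, AdamChoice.outcome] at h ⊢ <;> aesop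

theorem eq_s2_of_mem_adamChoice_true (h : q' ∈ ((exampleAut.δ s1 lb).adamChoice true).outcome) :
    q' = s2 := h

end Steps

theorem exampleAut_acc_iff (w : ℕ → L3) (ρ : ℕ → St5) :
    exampleAut.acc (trace w ρ) ↔ InfOften fun n => ρ (n + 1) = s1 ∨ ρ (n + 1) = s3 :=
  Iff.rfl

theorem exampleAut_not_acc {w : ℕ → L3} {ρ : ℕ → St5} (N : ℕ)
    (hN : ∀ n, N ≤ n → ρ n ≠ s1 ∧ ρ n ≠ s3) : ¬ exampleAut.acc (trace w ρ) := by
  intro hacc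
  obtain ⟨n, hn, hs⟩ := hacc N
  have := hN (n + 1) (by omega)
  tauto

theorem exampleAut_accepts_of {w : ℕ → L3} (N : ℕ) (hN : ∀ n, N ≤ n → w n ≠ la)
    (hc : InfOften fun n => w n = lc) : exampleAut.Accepts w := by
  refine ⟨fun _ n q => (exampleAut.δ q (w n)).eveChoice (decide (N ≤ n)), fun ρ h0 hρ => ?_⟩
  simp only at hρ
  have hstep n : exampleAut.Step (ρ n) (w n) (ρ (n + 1)) := EveChoice.outcome_subset_atoms _ (hρ n)
  have hwait : ∀ n ≤ N, ρ n = s0 := by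
    intro n hn
    induction n with
    | zero => exact h0
    | succ n ih =>
      have h := hρ n
      rw [ih (by omega), decide_eq_false (by omega)] at h
      exact eq_s0_of_mem_eveChoice_false h
  have hlive : ∀ n, N + 1 ≤ n → ρ n ∈ ({s1, s2, s3} : Set St5) := by
    refine forall_ge_mem_of_step ?_ fun n hn hq => step_mem_live (hstep n) hq (hN n (by omega))
    have h := hρ N
    rw [hwait N le_rfl, decide_eq_true le_rfl] at h
    simp [eq_s1_of_mem_eveChoice_true h (hN N le_rfl)]
  intro M
  obtain ⟨n, hn, hwn⟩ := hc (max M (N + 1))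
  have h := hstep n
  rw [hwn] at h
  exact ⟨n, by omega, step_accepting_of_lc h (hlive n (by omega))⟩

theorem exampleAut_eventually_ne_la {w : ℕ → L3} {ρ : ℕ → St5}
    (hstep : ∀ n, exampleAut.Step (ρ n) (w n) (ρ (n + 1)))
    (hacc : exampleAut.acc (trace w ρ)) : ∃ N, ∀ n, N ≤ n → w n ≠ la := by
  obtain ⟨n₀, -, hs⟩ := (exampleAut_acc_iff w ρ).1 hacc 0
  have hne : ∀ n, n₀ + 1 ≤ n → ρ n ∈ {q | q ≠ s0} :=
    forall_ge_mem_of_step (by rcases hs with h | h <;> simp [h])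
      fun n _ hq => step_ne_s0 (hstep n) hq
  refine ⟨n₀ + 1, fun m hm hma => exampleAut_not_acc (m + 1) ?_ hacc⟩
  have hdead : ∀ n, m + 1 ≤ n → ρ n ∈ ({dead} : Set St5) :=
    forall_ge_mem_of_step (step_eq_dead_of_la (hstep m) (hne m hm) hma)
      fun n _ hq => step_eq_dead_of_dead (hstep n) hq
  intro n hn
  simp [Set.mem_singleton_iff.mp (hdead n hn)]

theorem exampleAut_infOften_lc {w : ℕ → L3} (hw : exampleAut.Accepts w) :
    InfOften fun n => w n = lc := by
  intro M
  by_contra! hM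
  obtain ⟨ρ, h0, hρ, hacc⟩ :=
    hw.exists_acc_path fun n q => (exampleAut.δ q (w n)).adamChoice (decide (M ≤ n))
  have hstep n : exampleAut.Step (ρ n) (w n) (ρ (n + 1)) := AdamChoice.outcome_subset_atoms _ (hρ n)
  have hbefore : ∀ n ≤ M, ρ n ∈ ({s0, s1, dead} : Set St5) := by
    intro n hn
    induction n with
    | zero => simp [h0, exampleAut]
    | succ n ih =>
      have h := hρ n
      rw [decide_eq_false (by omega)] at h
      exact mem_of_mem_adamChoice_false h (ih (by omega))
  have hno_s3 : ∀ n, M ≤ n → ρ n ∈ {q | q ≠ s3} :=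
    forall_ge_mem_of_step (fun h => by simpa [h] using hbefore M le_rfl)
      fun n hn hq => step_ne_s3 (hstep n) hq (hM n hn)
  obtain ⟨j, hj, hs⟩ := hacc M
  have hj1 : ρ (j + 1) = s1 := hs.resolve_right (hno_s3 (j + 1) (by omega))
  have htrap : ρ (j + 2) ∈ ({s2, dead} : Set St5) := by
    cases hx : w (j + 1)
    · simp [step_eq_dead_of_la (hstep (j + 1)) (by simp [hj1]) hx]
    · have h := hρ (j + 1)
      rw [hj1, hx, decide_eq_true (by omega)] at h
      simp [eq_s2_of_mem_adamChoice_true h]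
    · exact absurd hx (hM (j + 1) (by omega))
  refine exampleAut_not_acc (j + 2) (fun n hn => ?_) hacc
  have := forall_ge_mem_of_step htrap
    (fun n hn hq => step_mem_s2_dead (hstep n) hq (hM n (by omega))) n hn
  aesop

theorem exampleAut_accepts_iff (w : ℕ → L3) :
    exampleAut.Accepts w ↔
      ((∃ N, ∀ n, N ≤ n → w n ≠ la) ∧ InfOften fun n => w n = lc) := by
  refine ⟨fun hw => ⟨?_, exampleAut_infOften_lc hw⟩,
    fun ⟨⟨N, hN⟩, hc⟩ => exampleAut_accepts_of N hN hc⟩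
  obtain ⟨ρ, -, hρ, hacc⟩ :=
    hw.exists_acc_path fun n q => (exampleAut.δ q (w n)).adamChoice false
  exact exampleAut_eventually_ne_la (fun n => AdamChoice.outcome_subset_atoms _ (hρ n)) hacc

def adamLetter : St5 → L3
  | s1 => la
  | _ => lc

theorem exampleAut_not_existsGFG : ¬ ExistsGFG exampleAut := by
  intro hM
  obtain ⟨ρ, h0, hρ, hwin⟩ :=
    hM.exists_path adamLetter fun a q => (exampleAut.δ q a).adamChoice false
  have hstep n : exampleAut.Step (ρ n) (adamLetter (ρ n)) (ρ (n + 1)) :=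
    AdamChoice.outcome_subset_atoms _ (hρ n)
  have hreach n : ρ n ∈ ({s0, s1, dead} : Set St5) :=
    forall_ge_mem_of_step (by simp [h0, exampleAut])
      (fun n _ hq => mem_of_mem_adamChoice_false (hρ n) hq) n n.zero_le
  obtain ⟨N, hN⟩ : ∃ N, ∀ n, N ≤ n → ρ n ≠ s1 := by
    by_cases h : ∃ m, ρ m = s1
    · obtain ⟨m, hm⟩ := h
      have hdead : ∀ n, m + 1 ≤ n → ρ n ∈ ({dead} : Set St5) :=
        forall_ge_mem_of_step
          (step_eq_dead_of_la (hstep m) (by simp [hm]) (by simp [hm, adamLetter]))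
          fun n _ hq => step_eq_dead_of_dead (hstep n) hq
      exact ⟨m + 1, fun n hn => by simp [Set.mem_singleton_iff.mp (hdead n hn)]⟩
    · exact ⟨0, fun n _ hn => h ⟨n, hn⟩⟩
  have hlc : ∀ n, N ≤ n → adamLetter (ρ n) = lc := fun n hn => by
    have := hN n hn
    cases h : ρ n <;> simp_all [adamLetter]
  have hL : exampleAut.Accepts fun n => adamLetter (ρ n) :=
    exampleAut_accepts_of N (fun n hn => by simp [hlc n hn])
      fun M => ⟨max M N, le_max_left _ _, hlc _ (le_max_right _ _)⟩
  refine exampleAut_not_acc N (fun n hn => ⟨hN n hn, fun h3 => ?_⟩) (hwin hL)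
  simpa [h3] using hreach n

def eveLetter : St5 → L3
  | s2 => lc
  | _ => lb

theorem exampleAut_not_forallGFG : ¬ ForallGFG exampleAut := by
  intro hM
  obtain ⟨ρ, h0, hρ, hwin⟩ :=
    hM.exists_path eveLetter fun a q => (exampleAut.δ q a).eveChoice true
  have hstep n : exampleAut.Step (ρ n) (eveLetter (ρ n)) (ρ (n + 1)) :=
    EveChoice.outcome_subset_atoms _ (hρ n)
  have hne_la q : eveLetter q ≠ la := by cases q <;> simp [eveLetter]
  have hlive : ∀ n, 1 ≤ n → ρ n ∈ ({s1, s2, s3} : Set St5) := by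
    refine forall_ge_mem_of_step ?_ fun n _ hq => step_mem_live (hstep n) hq (hne_la _)
    have h := hρ 0
    rw [h0] at h
    simp [eq_s1_of_mem_eveChoice_true h (hne_la _)]
  have hacc : exampleAut.acc (trace (fun n => eveLetter (ρ n)) ρ) := by
    intro N
    by_cases h2 : ρ (N + 1) = s2
    · have h := hstep (N + 1)
      rw [h2] at h
      exact ⟨N + 1, by omega, step_accepting_of_lc h (by simp)⟩
    · have := hlive (N + 1) (by omega)
      simp only [Set.mem_insert_iff, Set.mem_singleton_iff] at this
      exact ⟨N, le_rfl, by tauto⟩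
  have hnotL : ¬ exampleAut.Accepts fun n => eveLetter (ρ n) := fun hw => by
    obtain ⟨n, -, hn⟩ := exampleAut_infOften_lc hw 0
    have hn2 : ρ n = s2 := by cases h : ρ n <;> simp_all [eveLetter]
    have hs3 : ∀ k, n + 1 ≤ k → ρ k ∈ ({s3} : Set St5) :=
      forall_ge_mem_of_step (step_eq_s3_of_s2_lc (hstep n) hn2 hn)
        fun k _ hq => step_eq_s3_of_s3 (hstep k) hq (hne_la _)
    obtain ⟨k, hk, hkc⟩ := exampleAut_infOften_lc hw (n + 1)
    simp [Set.mem_singleton_iff.mp (hs3 k hk), eveLetter] at hkc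
  exact hwin.elim hnotL (· hacc)

/-- the example automaton recognises the language of words in
which `a` occurs finitely often and `c` occurs infinitely often, and it is
neither ∃-GFG nor ∀-GFG (Adam wins Eve's letter game and Eve wins Adam's). -/
theorem exampleAut_language_and_not_gfg :
    (∀ w : ℕ → L3, exampleAut.Accepts w ↔
      ((∃ N, ∀ n, N ≤ n → w n ≠ L3.la) ∧ InfOften fun n => w n = L3.lc)) ∧
    ¬ ExistsGFG exampleAut ∧ ¬ ForallGFG exampleAut :=
  ⟨exampleAut_accepts_iff, exampleAut_not_existsGFG, exampleAut_not_forallGFG⟩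

end GFGPaper
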